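/- Let d ≥ 2, ν ≥ 0, and (F,G) solve F' = -F² - G - νF, G' = F - dFG with G(0) < 1/d. Let G₋ < 0 < G₊ < 1/d be the two roots with F = 0 of the level-set equation Φ(G,0) = Φ(G₀,F₀) of the frictionless first integral Φ. Then for all t ≥ 0, G₋ ≤ G(t) ≤ G₊ and F(t)² ≤ F₊², where F₊² is the maximum of F² on the level curve Φ(G,F) = Φ(G₀,F₀). In particular the trajectory is bounded. -/

import Mathlib

/-- The frictionless first integral of the characteristic system in dimension
`d`: the logarithmic formula for `d = 2` and the power formula otherwise. -/
noncomputable def coldPlasmaPhi (d : ℕ) (g f : ℝ) : ℝ :=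
  if d = 2 then
    (2 * f ^ 2 + (1 - 2 * g) * Real.log (1 - 2 * g) + 1) / (2 * (1 - 2 * g))
  else
    (((d : ℝ) - 2) * f ^ 2 - 2 * g + 1)
      / (((d : ℝ) - 2) * (1 - (d : ℝ) * g) ^ ((2 : ℝ) / d))


/-!
On the half-plane `g < 1/d` the first integral splits as
`Φ(g, f) = f² (1 - d g)^(-2/d) + Φ(g, 0)`, and `∂_g Φ(g, 0) = 2 g (1 - d g)^(-2/d - 1)`,
so `Φ(·, 0)` decreases on `g ≤ 0` and increases on `[0, 1/d)`. Along a solution, `1 - d G`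
solves the linear equation `u' = -d F u`, hence stays positive, and `t ↦ Φ(G t, F t)` has
derivative `-2 ν F² (1 - d G)^(-2/d) ≤ 0`. Therefore `Φ(G t, 0) ≤ Φ(G t, F t) ≤ Φ₀ = Φ(G±, 0)`,
which traps `G t` between the roots, and raising `F t²` until `Φ(G t, ·)` reaches `Φ₀` gives
a point of the level curve whose `f²` dominates `F t²`.
-/
open Real Set

lemma coldPlasmaPhi_eq_add (d : ℕ) {g : ℝ} (hg : 0 < 1 - d * g) (f : ℝ) :
    coldPlasmaPhi d g f = f ^ 2 * (1 - d * g) ^ (-(2 / d : ℝ)) + coldPlasmaPhi d g 0 := by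
  unfold coldPlasmaPhi
  split_ifs with h2
  · subst h2
    push_cast at hg ⊢
    rw [show -(2 / 2 : ℝ) = -1 by norm_num, rpow_neg_one]
    have := hg.ne'
    field_simp
    ring
  · have : (d - 2 : ℝ) ≠ 0 := sub_ne_zero.2 (by exact_mod_cast h2)
    have := (rpow_pos_of_pos hg (2 / d)).ne'
    rw [rpow_neg hg.le]
    field_simp
    ring

lemma coldPlasmaPhi_zero_le (d : ℕ) {g : ℝ} (hg : 0 < 1 - d * g) (f : ℝ) :
    coldPlasmaPhi d g 0 ≤ coldPlasmaPhi d g f := by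
  rw [coldPlasmaPhi_eq_add d hg f]
  have := rpow_pos_of_pos hg (-(2 / d : ℝ))
  exact le_add_of_nonneg_left (by positivity)

lemma exists_coldPlasmaPhi_eq_of_le (d : ℕ) {g f c : ℝ} (hg : 0 < 1 - d * g)
    (h : coldPlasmaPhi d g f ≤ c) : ∃ f', coldPlasmaPhi d g f' = c ∧ f ^ 2 ≤ f' ^ 2 := by
  have hw := rpow_pos_of_pos hg (-(2 / d : ℝ))
  set s := (c - coldPlasmaPhi d g 0) / (1 - d * g) ^ (-(2 / d : ℝ))
  rw [coldPlasmaPhi_eq_add d hg] at h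
  have hfs : f ^ 2 ≤ s := by rw [le_div_iff₀ hw]; linarith
  have hs : 0 ≤ s := (sq_nonneg f).trans hfs
  refine ⟨√s, ?_, by rwa [sq_sqrt hs]⟩
  rw [coldPlasmaPhi_eq_add d hg, sq_sqrt hs, div_mul_cancel₀ _ hw.ne']
  ring

lemma hasDerivAt_coldPlasmaPhi_zero {d : ℕ} (hd : d ≠ 0) {g : ℝ} (hg : 0 < 1 - d * g) :
    HasDerivAt (fun x => coldPlasmaPhi d x 0) (2 * g * (1 - d * g) ^ (-(2 / d : ℝ) - 1)) g := by
  have hlin : HasDerivAt (fun x : ℝ => 1 - d * x) (-d) g := by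
    simpa using ((hasDerivAt_id g).const_mul (d : ℝ)).const_sub 1
  rcases eq_or_ne d 2 with rfl | h2
  · have hphi : (fun x => coldPlasmaPhi 2 x 0)
        = fun x => ((1 - 2 * x) * log (1 - 2 * x) + 1) / (2 * (1 - 2 * x)) := by
      funext x; simp [coldPlasmaPhi]
    rw [hphi]
    push_cast at hg hlin ⊢
    have := ((hlin.mul (hlin.log hg.ne')).add_const 1).div (hlin.const_mul 2) (by positivity)
    refine this.congr_deriv ?_
    rw [show -(2 / 2 : ℝ) - 1 = ((-2 : ℤ) : ℝ) by norm_num, rpow_intCast, zpow_neg, zpow_two,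
      Pi.mul_apply]
    field_simp
    ring
  · have hphi : (fun x => coldPlasmaPhi d x 0)
        = fun x : ℝ => (1 - 2 * x) / ((d - 2) * (1 - d * x) ^ (2 / d : ℝ)) := by
      funext x; simp [coldPlasmaPhi, h2]; ring
    rw [hphi]
    have hd2 : (d - 2 : ℝ) ≠ 0 := sub_ne_zero.2 (by exact_mod_cast h2)
    have hA := (rpow_pos_of_pos hg (2 / d)).ne'
    have := (((hasDerivAt_id g).const_mul (2 : ℝ)).const_sub 1).div
      ((hlin.rpow_const (p := 2 / d) (Or.inl hg.ne')).const_mul (d - 2 : ℝ)) (mul_ne_zero hd2 hA)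
    refine this.congr_deriv ?_
    rw [rpow_sub hg, rpow_sub hg, rpow_neg hg.le, rpow_one, id]
    field_simp
    ring

lemma strictAntiOn_coldPlasmaPhi_zero {d : ℕ} (hd : d ≠ 0) :
    StrictAntiOn (fun g => coldPlasmaPhi d g 0) (Iic 0) := by
  have hpos : ∀ g ∈ Iic (0 : ℝ), 0 < 1 - d * g := fun g hg => by
    have : g ≤ 0 := hg
    nlinarith [(d.cast_nonneg : (0 : ℝ) ≤ d)]
  refine strictAntiOn_of_deriv_neg (convex_Iic 0)
    (fun g hg => (hasDerivAt_coldPlasmaPhi_zero hd (hpos g hg)).continuousAt.continuousWithinAt)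
    fun g hg => ?_
  rw [interior_Iic] at hg
  rw [(hasDerivAt_coldPlasmaPhi_zero hd (hpos g (mem_Iio.1 hg).le)).deriv]
  exact mul_neg_of_neg_of_pos (by linarith [mem_Iio.1 hg])
    (rpow_pos_of_pos (hpos g (mem_Iio.1 hg).le) _)

lemma strictMonoOn_coldPlasmaPhi_zero {d : ℕ} (hd : d ≠ 0) :
    StrictMonoOn (fun g => coldPlasmaPhi d g 0) (Ico 0 (1 / d)) := by
  have hpos : ∀ g ∈ Ico (0 : ℝ) (1 / d), 0 < 1 - d * g := fun g hg => by
    rw [sub_pos, ← lt_div_iff₀' (by positivity)]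
    exact hg.2
  refine strictMonoOn_of_deriv_pos (convex_Ico 0 _)
    (fun g hg => (hasDerivAt_coldPlasmaPhi_zero hd (hpos g hg)).continuousAt.continuousWithinAt)
    fun g hg => ?_
  rw [interior_Ico] at hg
  rw [(hasDerivAt_coldPlasmaPhi_zero hd (hpos g (Ioo_subset_Ico_self hg))).deriv]
  exact mul_pos (by linarith [hg.1]) (rpow_pos_of_pos (hpos g (Ioo_subset_Ico_self hg)) _)

lemma eq_mul_exp_integral_of_hasDerivAt {u a : ℝ → ℝ} (ha : Continuous a)
    (hu : ∀ t, HasDerivAt u (a t * u t) t) (t : ℝ) :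
    u t = u 0 * exp (∫ s in (0 : ℝ)..t, a s) := by
  have hI : ∀ t, HasDerivAt (fun t => ∫ s in (0 : ℝ)..t, a s) (a t) t := fun t =>
    (ha.integral_hasStrictDerivAt 0 t).hasDerivAt
  have hw : ∀ t, HasDerivAt (fun t => u t * exp (-∫ s in (0 : ℝ)..t, a s)) 0 t := fun t =>
    ((hu t).mul (hI t).neg.exp).congr_deriv (by ring)
  have hconst := is_const_of_deriv_eq_zero (fun t => (hw t).differentiableAt)
    (fun t => (hw t).deriv) t 0
  simp only [intervalIntegral.integral_same, neg_zero, exp_zero, mul_one] at hconst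
  rw [← hconst, mul_assoc, ← exp_add, neg_add_cancel, exp_zero, mul_one]

lemma one_sub_mul_pos_of_hasDerivAt {d : ℝ} {F G : ℝ → ℝ} (hF : Continuous F)
    (hG : ∀ t, HasDerivAt G (F t - d * F t * G t) t) (h0 : 0 < 1 - d * G 0) (t : ℝ) :
    0 < 1 - d * G t := by
  have hu : ∀ t, HasDerivAt (fun t => 1 - d * G t) (-d * F t * (1 - d * G t)) t :=
    fun t => (((hG t).const_mul d).const_sub 1).congr_deriv (by ring)
  rw [eq_mul_exp_integral_of_hasDerivAt (by fun_prop) hu t]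
  positivity

lemma hasDerivAt_coldPlasmaPhi_comp {d : ℕ} (hd : d ≠ 0) {ν : ℝ} {F G : ℝ → ℝ}
    (hF : ∀ t, HasDerivAt F (-(F t) ^ 2 - G t - ν * F t) t)
    (hG : ∀ t, HasDerivAt G (F t - d * F t * G t) t)
    (hu : ∀ t, 0 < 1 - d * G t) (t : ℝ) :
    HasDerivAt (fun t => coldPlasmaPhi d (G t) (F t))
      (-(2 * ν * F t ^ 2 * (1 - d * G t) ^ (-(2 / d : ℝ)))) t := by
  have hpow := (((hG t).const_mul (d : ℝ)).const_sub 1).rpow_const (p := -(2 / d : ℝ))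
    (Or.inl (hu t).ne')
  have hsum := (((hF t).pow 2).mul hpow).add
    ((hasDerivAt_coldPlasmaPhi_zero hd (hu t)).comp t (hG t))
  rw [funext fun t => coldPlasmaPhi_eq_add d (hu t) (F t)]
  refine hsum.congr_deriv ?_
  rw [rpow_sub (hu t), rpow_one, Pi.pow_apply, Nat.cast_ofNat,
    show F t - d * F t * G t = F t * (1 - d * G t) by ring]
  have hu0 := (hu t).ne'
  generalize 1 - d * G t = u at hu0 ⊢
  field_simp
  ring

lemma coldPlasmaPhi_comp_le {d : ℕ} (hd : d ≠ 0) {ν : ℝ} (hν : 0 ≤ ν) {F G : ℝ → ℝ}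
    (hF : ∀ t, HasDerivAt F (-(F t) ^ 2 - G t - ν * F t) t)
    (hG : ∀ t, HasDerivAt G (F t - d * F t * G t) t)
    (hu : ∀ t, 0 < 1 - d * G t) {t : ℝ} (ht : 0 ≤ t) :
    coldPlasmaPhi d (G t) (F t) ≤ coldPlasmaPhi d (G 0) (F 0) := by
  refine antitone_of_hasDerivAt_nonpos (hasDerivAt_coldPlasmaPhi_comp hd hF hG hu)
    (fun t => ?_) ht
  have := rpow_pos_of_pos (hu t) (-(2 / d : ℝ))
  simp only [Pi.zero_apply, Left.neg_nonpos_iff]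
  positivity

/-- Boundedness of trajectories: for `d ≥ 2`, `ν ≥ 0`, a solution of
`F' = -F²-G-νF`, `G' = F-dFG` with `G(0) < 1/d` stays between the roots
`G₋ < 0 < G₊ < 1/d` of `Φ(G,0) = Φ(G₀,F₀)` and satisfies `F² ≤ F₊²`, where
`F₊²` is the maximum of `F²` on the level curve `Φ(G,F) = Φ(G₀,F₀)`. -/
theorem stmt18 (d : ℕ) (hd : 2 ≤ d) (ν : ℝ) (hν : 0 ≤ ν)
    (F G : ℝ → ℝ)
    (hF : ∀ t, HasDerivAt F (-(F t) ^ 2 - G t - ν * F t) t)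
    (hG : ∀ t, HasDerivAt G (F t - (d : ℝ) * F t * G t) t)
    (hG0 : G 0 < 1 / d)
    (Gm Gp Fp : ℝ)
    (hGm : Gm < 0) (hGp : 0 < Gp) (hGp' : Gp < 1 / d)
    (hrootm : coldPlasmaPhi d Gm 0 = coldPlasmaPhi d (G 0) (F 0))
    (hrootp : coldPlasmaPhi d Gp 0 = coldPlasmaPhi d (G 0) (F 0))
    (hFp : IsGreatest
      {y : ℝ | ∃ g f : ℝ, g < 1 / (d : ℝ) ∧
        coldPlasmaPhi d g f = coldPlasmaPhi d (G 0) (F 0) ∧ y = f ^ 2}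
      (Fp ^ 2)) :
    ∀ t ≥ (0 : ℝ), Gm ≤ G t ∧ G t ≤ Gp ∧ (F t) ^ 2 ≤ Fp ^ 2 := by
  intro t ht
  have hd0 : d ≠ 0 := by omega
  have hlt : ∀ g : ℝ, g < 1 / d ↔ 0 < 1 - d * g := fun g => by
    rw [sub_pos, lt_div_iff₀' (by positivity)]
  have hu := one_sub_mul_pos_of_hasDerivAt
    (continuous_iff_continuousAt.2 fun t => (hF t).continuousAt) hG ((hlt _).1 hG0)
  have hΦ := coldPlasmaPhi_comp_le hd0 hν hF hG hu ht
  have hΦ0 := (coldPlasmaPhi_zero_le d (hu t) (F t)).trans hΦ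
  refine ⟨?_, ?_, ?_⟩
  · rcases le_total 0 (G t) with h | h
    · linarith
    · exact ((strictAntiOn_coldPlasmaPhi_zero hd0).le_iff_ge h hGm.le).1 (hrootm ▸ hΦ0)
  · rcases le_total (G t) 0 with h | h
    · linarith
    · exact ((strictMonoOn_coldPlasmaPhi_zero hd0).le_iff_le ⟨h, (hlt _).2 (hu t)⟩
        ⟨hGp.le, hGp'⟩).1 (hrootp ▸ hΦ0)
  · obtain ⟨f, hf, hle⟩ := exists_coldPlasmaPhi_eq_of_le d (hu t) hΦ
    exact hle.trans (hFp.2 ⟨G t, f, (hlt _).2 (hu t), hf, rfl⟩)
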